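/- arXiv:2508.05568 — 2 statements merged into one kernel-verified Lean document; each statement's English description precedes it below -/
import Mathlib

section
/- Under the assumptions of the SGD convergence bound (β-smooth L bounded below, unbiased stochastic gradients with variance ≤ σ²), if additionally the learning rate satisfies η ≤ min{2/β, √(2Δ₀/(βσ²T))} and in fact η = min{1/β, √(2Δ₀/(βσ²T))}, then (1/T) Σ_{t=0}^{T−1} E‖∇L(θ^t)‖² ≤ C·(βΔ₀/T + √(βΔ₀σ²/T)) for an absolute constant C, i.e. the average squared gradient norm is O(1/√T). -/
open MeasureTheory Finset RealInnerProductSpace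

lemma sgd_line_deriv {d : ℕ} {L : EuclideanSpace ℝ (Fin d) → ℝ}
    (hd : ∀ x, DifferentiableAt ℝ L x) (x v : EuclideanSpace ℝ (Fin d)) (s : ℝ) :
    HasDerivAt (fun s : ℝ => L (x + s • v)) (⟪gradient L (x + s • v), v⟫) s := by
  have hc : HasDerivAt (fun s : ℝ => x + s • v) v s := by
    simpa using ((hasDerivAt_id s).smul_const v).const_add x
  have hL := ((hd (x + s • v)).hasGradientAt).hasFDerivAt
  have := hL.comp_hasDerivAt s hc
  simpa [InnerProductSpace.toDual_apply_apply, Function.comp_def] using this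

lemma sgd_descent {d : ℕ} {L : EuclideanSpace ℝ (Fin d) → ℝ} {β : ℝ} (hβ : 0 < β)
    (hd : ∀ x, DifferentiableAt ℝ L x)
    (hlip : ∀ x y, ‖gradient L x - gradient L y‖ ≤ β * ‖x - y‖)
    (x y : EuclideanSpace ℝ (Fin d)) :
    L y ≤ L x + ⟪gradient L x, y - x⟫ + β / 2 * ‖y - x‖ ^ 2 := by
  set v := y - x with hv
  set g : ℝ → ℝ := fun s => L (x + s • v) - s * ⟪gradient L x, v⟫ - β / 2 * ‖v‖ ^ 2 * s ^ 2
    with hg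
  have hg' : ∀ s : ℝ, HasDerivAt g
      (⟪gradient L (x + s • v), v⟫ - ⟪gradient L x, v⟫ - β / 2 * ‖v‖ ^ 2 * (2 * s)) s := by
    intro s
    have h1 := sgd_line_deriv hd x v s
    have h2 : HasDerivAt (fun s : ℝ => s * ⟪gradient L x, v⟫) (⟪gradient L x, v⟫) s := by
      simpa using (hasDerivAt_id s).mul_const (⟪gradient L x, v⟫)
    have h3 : HasDerivAt (fun s : ℝ => β / 2 * ‖v‖ ^ 2 * s ^ 2) (β / 2 * ‖v‖ ^ 2 * (2 * s)) s := by
      have := ((hasDerivAt_pow 2 s).const_mul (β / 2 * ‖v‖ ^ 2))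
      simpa [mul_comm, mul_assoc, mul_left_comm] using this
    exact (h1.sub h2).sub h3
  have hanti : AntitoneOn g (Set.Icc (0:ℝ) 1) := by
    apply antitoneOn_of_deriv_nonpos (convex_Icc 0 1)
    · exact fun s _ => ((hg' s).continuousAt).continuousWithinAt
    · intro s hs
      exact ((hg' s).differentiableAt).differentiableWithinAt
    · intro s hs
      rw [interior_Icc] at hs
      rw [(hg' s).deriv]
      have hsub : ⟪gradient L (x + s • v), v⟫ - ⟪gradient L x, v⟫
          = ⟪gradient L (x + s • v) - gradient L x, v⟫ := (inner_sub_left _ _ _).symm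
      have hbd : ⟪gradient L (x + s • v) - gradient L x, v⟫ ≤ β * s * ‖v‖ ^ 2 := by
        calc ⟪gradient L (x + s • v) - gradient L x, v⟫
            ≤ ‖gradient L (x + s • v) - gradient L x‖ * ‖v‖ := real_inner_le_norm _ _
          _ ≤ (β * ‖(x + s • v) - x‖) * ‖v‖ := by
              gcongr; exact hlip _ _
          _ = β * s * ‖v‖ ^ 2 := by
              rw [add_sub_cancel_left, norm_smul, Real.norm_eq_abs,
                abs_of_pos hs.1]; ring
      rw [hsub]
      nlinarith [hbd]
  have h01 := hanti (Set.left_mem_Icc.2 zero_le_one) (Set.right_mem_Icc.2 zero_le_one)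
    zero_le_one
  simp only [hg, zero_smul, add_zero, one_smul, zero_mul, mul_zero, sub_zero,
    zero_pow, one_pow, mul_one] at h01
  have : x + v = y := by rw [hv]; abel
  rw [this] at h01
  linarith

lemma euclid_abs_le {d : ℕ} (x : EuclideanSpace ℝ (Fin d)) (i : Fin d) : |x i| ≤ ‖x‖ := by
  have h : ‖x i‖ ^ 2 ≤ ‖x‖ ^ 2 := by
    rw [EuclideanSpace.norm_eq, Real.sq_sqrt (by positivity)]
    exact Finset.single_le_sum (fun j _ => sq_nonneg ‖x j‖) (mem_univ i)
  have := Real.sqrt_le_sqrt h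
  rwa [Real.sqrt_sq (norm_nonneg _), Real.sqrt_sq (norm_nonneg _), Real.norm_eq_abs] at this

lemma sgd_inner_integrable {d : ℕ} {Ω : Type} [m0 : MeasurableSpace Ω] {μ : Measure Ω}
    {f D : Ω → EuclideanSpace ℝ (Fin d)}
    (hfm : AEStronglyMeasurable f μ) (hDm : AEStronglyMeasurable D μ)
    (hf2 : Integrable (fun ω => ‖f ω‖ ^ 2) μ) (hD2 : Integrable (fun ω => ‖D ω‖ ^ 2) μ) :
    Integrable (fun ω => ⟪f ω, D ω⟫) μ := by
  have hm : AEStronglyMeasurable (fun ω => ⟪f ω, D ω⟫) μ := hfm.inner hDm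
  refine Integrable.mono' ((hf2.add hD2).div_const 2) hm ?_
  filter_upwards with ω
  have h1 : |⟪f ω, D ω⟫| ≤ ‖f ω‖ * ‖D ω‖ := abs_real_inner_le_norm _ _
  have h2 : ‖f ω‖ * ‖D ω‖ ≤ (‖f ω‖ ^ 2 + ‖D ω‖ ^ 2) / 2 := by
    nlinarith [sq_nonneg (‖f ω‖ - ‖D ω‖)]
  rw [Real.norm_eq_abs]
  exact h1.trans h2

lemma sgd_integral_inner_zero {d : ℕ} {Ω : Type} {m : MeasurableSpace Ω}
    [m0 : MeasurableSpace Ω] {μ : Measure Ω}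
    [IsProbabilityMeasure μ] (hm : m ≤ m0)
    {f D : Ω → EuclideanSpace ℝ (Fin d)}
    (hfm : Measurable[m] f) (hDm : Measurable D)
    (hDi : Integrable D μ)
    (hf2 : Integrable (fun ω => ‖f ω‖ ^ 2) μ) (hD2 : Integrable (fun ω => ‖D ω‖ ^ 2) μ)
    (hD : μ[D | m] =ᵐ[μ] 0) :
    ∫ ω, ⟪f ω, D ω⟫ ∂μ = 0 := by
  haveI : SigmaFinite (μ.trim hm) := by
    have : IsFiniteMeasure (μ.trim hm) := isFiniteMeasure_trim hm
    infer_instance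
  have hfm0 : Measurable f := fun s hs => hm _ (hfm hs)
  have hcoord : ∀ i : Fin d, μ[fun ω => D ω i | m] =ᵐ[μ] 0 := by
    intro i
    have hDii : Integrable (fun ω => D ω i) μ :=
      (EuclideanSpace.proj (𝕜 := ℝ) i).integrable_comp hDi
    symm
    refine ae_eq_condExp_of_forall_setIntegral_eq hm hDii
      (fun s _ _ => (integrable_zero Ω ℝ μ).integrableOn) ?_ ?_
    · intro s hs hμs
      have hDs : Integrable D (μ.restrict s) := hDi.restrict
      have h1 : ∫ ω in s, D ω i ∂μ = (∫ ω in s, D ω ∂μ) i := by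
        have := (EuclideanSpace.proj (𝕜 := ℝ) i).integral_comp_comm hDs
        simpa using this
      have h2 : ∫ ω in s, D ω ∂μ = ∫ ω in s, (μ[D | m]) ω ∂μ :=
        (setIntegral_condExp hm hDi hs).symm
      have h3 : ∫ ω in s, (μ[D | m]) ω ∂μ = 0 := by
        rw [setIntegral_congr_ae (hm s hs) (hD.mono fun ω hω _ => hω)]
        simp
      simp [h1, h2, h3]
    · exact StronglyMeasurable.aestronglyMeasurable
        (stronglyMeasurable_const (β := ℝ))
  have hinner : ∀ ω, ⟪f ω, D ω⟫ = ∑ i : Fin d, f ω i * D ω i := by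
    intro ω
    simp [PiLp.inner_apply, RCLike.inner_apply, mul_comm]
  have hint : ∀ i : Fin d, Integrable (fun ω => f ω i * D ω i) μ := by
    intro i
    have hmeas : AEStronglyMeasurable (fun ω => f ω i * D ω i) μ :=
      (((measurable_pi_apply i).comp ((PiLp.continuous_ofLp 2 _).measurable.comp hfm0)).mul
        ((measurable_pi_apply i).comp ((PiLp.continuous_ofLp 2 _).measurable.comp hDm))).aestronglyMeasurable
    refine Integrable.mono' ((hf2.add hD2).div_const 2) hmeas ?_
    filter_upwards with ω
    have h1 : |f ω i| ≤ ‖f ω‖ := euclid_abs_le (f ω) i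
    have h2 : |D ω i| ≤ ‖D ω‖ := euclid_abs_le (D ω) i
    have h3 : |f ω i * D ω i| ≤ ‖f ω‖ * ‖D ω‖ := by
      rw [abs_mul]
      exact mul_le_mul h1 h2 (abs_nonneg _) (norm_nonneg _)
    have h4 : ‖f ω‖ * ‖D ω‖ ≤ (‖f ω‖ ^ 2 + ‖D ω‖ ^ 2) / 2 := by
      nlinarith [sq_nonneg (‖f ω‖ - ‖D ω‖)]
    rw [Real.norm_eq_abs]
    exact h3.trans h4
  have hsum : ∫ ω, ⟪f ω, D ω⟫ ∂μ = ∑ i : Fin d, ∫ ω, f ω i * D ω i ∂μ := by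
    rw [← integral_finset_sum _ (fun i _ => hint i)]
    exact integral_congr_ae (Filter.Eventually.of_forall fun ω => hinner ω)
  rw [hsum]
  refine Finset.sum_eq_zero fun i _ => ?_
  have hfim : StronglyMeasurable[m] (fun ω => f ω i) :=
    ((measurable_pi_apply i).comp ((PiLp.continuous_ofLp 2 _).measurable.comp hfm)).stronglyMeasurable
  have hDii : Integrable (fun ω => D ω i) μ :=
    (EuclideanSpace.proj (𝕜 := ℝ) i).integrable_comp hDi
  have hpull := condExp_mul_of_stronglyMeasurable_left (μ := μ) hfim (hint i) hDii
  calc ∫ ω, f ω i * D ω i ∂μ = ∫ ω, (μ[fun ω => f ω i * D ω i | m]) ω ∂μ :=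
        (integral_condExp hm).symm
    _ = ∫ ω, f ω i * (μ[fun ω => D ω i | m]) ω ∂μ := integral_congr_ae hpull
    _ = ∫ ω, (0:ℝ) ∂μ := integral_congr_ae ((hcoord i).mono fun ω hω => by simp [hω])
    _ = 0 := integral_zero _ _

set_option maxHeartbeats 1000000 in
/-- There is an absolute constant `C > 0` such that, under the SGD
convergence assumptions (β-smooth `L` bounded below, conditionally unbiased
stochastic gradients with variance `≤ σ²`), with the stepsize choice
`η = min{1/β, √(2Δ₀/(βσ²T))}` (which satisfies `η ≤ min{2/β, √(2Δ₀/(βσ²T))}`),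
`(1/T) Σ_{t<T} E‖∇L(θ^t)‖² ≤ C·(βΔ₀/T + √(βΔ₀σ²/T))`, i.e. the average squared
gradient norm is `O(1/√T)`. -/
theorem sgd_convergence_rate :
    ∃ C : ℝ, 0 < C ∧
      ∀ (d : ℕ) (L : EuclideanSpace ℝ (Fin d) → ℝ)
        (Ω : Type) (m0 : MeasurableSpace Ω) (μ : Measure Ω)
        (_ : IsProbabilityMeasure μ)
        (ℱ : ℕ → MeasurableSpace Ω) (_ : ∀ t, ℱ t ≤ m0)
        (_ : ∀ s t, s ≤ t → ℱ s ≤ ℱ t)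
        (θ G : ℕ → Ω → EuclideanSpace ℝ (Fin d))
        (θ0 : EuclideanSpace ℝ (Fin d)) (β σ η Lstar : ℝ) (T : ℕ),
        0 < β → 0 < σ → 1 ≤ T →
        (∀ x, DifferentiableAt ℝ L x) →
        (∀ x y, ‖gradient L x - gradient L y‖ ≤ β * ‖x - y‖) →
        (∀ x, Lstar ≤ L x) → 0 < L θ0 - Lstar →
        η = min (1 / β) (Real.sqrt (2 * (L θ0 - Lstar) / (β * σ ^ 2 * T))) →
        (∀ ω, θ 0 ω = θ0) →
        (∀ t ω, θ (t + 1) ω = θ t ω - η • G t ω) →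
        (∀ t, Measurable[ℱ t] (θ t)) →
        (∀ t, Measurable[ℱ (t + 1)] (G t)) →
        (∀ t, Integrable (G t) μ) →
        (∀ t, Integrable (fun ω => ‖G t ω - gradient L (θ t ω)‖ ^ 2) μ) →
        (∀ t, Integrable (fun ω => L (θ t ω)) μ) →
        (∀ t, Integrable (fun ω => ‖gradient L (θ t ω)‖ ^ 2) μ) →
        (∀ t, μ[G t | ℱ t] =ᵐ[μ] fun ω => gradient L (θ t ω)) →
        (∀ t,
          μ[fun ω => ‖G t ω - gradient L (θ t ω)‖ ^ 2 | ℱ t] ≤ᵐ[μ]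
            fun _ => σ ^ 2) →
        (1 / (T : ℝ)) * ∑ t ∈ range T, ∫ ω, ‖gradient L (θ t ω)‖ ^ 2 ∂μ ≤
          C * (β * (L θ0 - Lstar) / T
            + Real.sqrt (β * (L θ0 - Lstar) * σ ^ 2 / T)) := by
  refine ⟨4, by norm_num, ?_⟩
  intro d L Ω m0 μ hprob ℱ hle hmono θ G θ0 β σ η Lstar T hβ hσ hT hdiff hlip hLstar hΔ hη
    hθ0 hupd hθmeas hGmeas hGi hD2 hLi hf2 hunbias hvar
  haveI := hprob
  set Δ : ℝ := L θ0 - Lstar with hΔdef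
  have hT0 : (0:ℝ) < T := by exact_mod_cast Nat.lt_of_lt_of_le Nat.zero_lt_one hT
  have hT0' : (T:ℝ) ≠ 0 := ne_of_gt hT0
  have hβ0 : β ≠ 0 := ne_of_gt hβ
  have hσ0 : σ ≠ 0 := ne_of_gt hσ
  have hΔ0 : Δ ≠ 0 := ne_of_gt hΔ
  set a : ℝ := Real.sqrt (2 * Δ / (β * σ ^ 2 * T)) with ha_def
  have harg : 0 < 2 * Δ / (β * σ ^ 2 * T) := by
    apply div_pos (by linarith) (by positivity)
  have ha : 0 < a := Real.sqrt_pos.2 harg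
  have hη0 : 0 < η := by rw [hη]; exact lt_min (by positivity) ha
  have hηne : η ≠ 0 := ne_of_gt hη0
  have hηβ : β * η ≤ 1 := by
    have h : η ≤ 1 / β := by rw [hη]; exact min_le_left _ _
    rw [le_div_iff₀ hβ] at h; linarith
  have hηa : η ≤ a := by rw [hη]; exact min_le_right _ _
  -- measurability
  have hgradcont : Continuous (gradient L) := by
    have h : LipschitzWith β.toNNReal (gradient L) := by
      apply LipschitzWith.of_dist_le_mul
      intro x y
      rw [dist_eq_norm, dist_eq_norm, Real.coe_toNNReal β hβ.le]
      exact hlip x y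
    exact h.continuous
  have hθm0 : ∀ t, Measurable (θ t) := fun t s hs => hle t _ (hθmeas t hs)
  have hGm0 : ∀ t, Measurable (G t) := fun t s hs => hle (t+1) _ (hGmeas t hs)
  have hfmeas : ∀ t, Measurable[ℱ t] (fun ω => gradient L (θ t ω)) :=
    fun t => hgradcont.measurable.comp (hθmeas t)
  have hfm0 : ∀ t, Measurable (fun ω => gradient L (θ t ω)) :=
    fun t => hgradcont.measurable.comp (hθm0 t)
  have hDm : ∀ t, Measurable (fun ω => G t ω - gradient L (θ t ω)) :=
    fun t => (hGm0 t).sub (hfm0 t)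
  -- integrability
  have hDi : ∀ t, Integrable (fun ω => G t ω - gradient L (θ t ω)) μ := by
    intro t
    refine Integrable.mono' (((integrable_const (1:ℝ)).add (hD2 t)).div_const 2)
      (hDm t).aestronglyMeasurable ?_
    filter_upwards with ω
    have := sq_nonneg (‖G t ω - gradient L (θ t ω)‖ - 1)
    simp only [Pi.add_apply]
    nlinarith [norm_nonneg (G t ω - gradient L (θ t ω))]
  have hfi : ∀ t, Integrable (fun ω => gradient L (θ t ω)) μ := by
    intro t
    have h := (hGi t).sub (hDi t)
    refine h.congr (Filter.Eventually.of_forall fun ω => ?_)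
    simp only [Pi.sub_apply]
    abel
  have hG2 : ∀ t, Integrable (fun ω => ‖G t ω‖ ^ 2) μ := by
    intro t
    refine Integrable.mono' (((hf2 t).add (hD2 t)).const_mul 2)
      ((hGm0 t).norm.pow_const 2).aestronglyMeasurable ?_
    filter_upwards with ω
    have h : G t ω = gradient L (θ t ω) + (G t ω - gradient L (θ t ω)) := by abel
    rw [Real.norm_eq_abs, abs_of_nonneg (by positivity), h]
    simp only [Pi.add_apply]
    nlinarith [sq_nonneg (‖gradient L (θ t ω)‖ - ‖G t ω - gradient L (θ t ω)‖),
      norm_nonneg (gradient L (θ t ω)), norm_nonneg (G t ω - gradient L (θ t ω)),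
      norm_add_le (gradient L (θ t ω)) (G t ω - gradient L (θ t ω)),
      norm_nonneg (gradient L (θ t ω) + (G t ω - gradient L (θ t ω)))]
  -- conditional expectation facts
  have hD0 : ∀ t, μ[fun ω => G t ω - gradient L (θ t ω) | ℱ t] =ᵐ[μ] 0 := by
    intro t
    haveI : SigmaFinite (μ.trim (hle t)) := by
      have h : IsFiniteMeasure (μ.trim (hle t)) := isFiniteMeasure_trim (hle t)
      infer_instance
    have e : (fun ω => G t ω - gradient L (θ t ω)) = G t - (fun ω => gradient L (θ t ω)) := by
      funext ω; simp [Pi.sub_apply]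
    rw [e]
    have h1 : μ[G t - (fun ω => gradient L (θ t ω)) | ℱ t] =ᵐ[μ]
        μ[G t | ℱ t] - μ[(fun ω => gradient L (θ t ω)) | ℱ t] :=
      condExp_sub (hGi t) (hfi t) (ℱ t)
    have h2 : μ[(fun ω => gradient L (θ t ω)) | ℱ t] = fun ω => gradient L (θ t ω) :=
      condExp_of_stronglyMeasurable (hle t) (hfmeas t).stronglyMeasurable (hfi t)
    refine h1.trans ?_
    rw [h2]
    filter_upwards [hunbias t] with ω hω
    simp only [Pi.sub_apply, Pi.zero_apply]
    rw [hω]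
    simp
  have horth : ∀ t, ∫ ω, ⟪gradient L (θ t ω), G t ω - gradient L (θ t ω)⟫ ∂μ = 0 :=
    fun t => sgd_integral_inner_zero (hle t) (hfmeas t) (hDm t) (hDi t) (hf2 t) (hD2 t) (hD0 t)
  have hvarint : ∀ t, ∫ ω, ‖G t ω - gradient L (θ t ω)‖ ^ 2 ∂μ ≤ σ ^ 2 := by
    intro t
    haveI : SigmaFinite (μ.trim (hle t)) := by
      have h : IsFiniteMeasure (μ.trim (hle t)) := isFiniteMeasure_trim (hle t)
      infer_instance
    calc ∫ ω, ‖G t ω - gradient L (θ t ω)‖ ^ 2 ∂μ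
        = ∫ ω, (μ[fun ω => ‖G t ω - gradient L (θ t ω)‖ ^ 2 | ℱ t]) ω ∂μ :=
          (integral_condExp (hle t)).symm
      _ ≤ ∫ _, σ ^ 2 ∂μ := integral_mono_ae integrable_condExp (integrable_const _) (hvar t)
      _ = σ ^ 2 := by simp
  have hfGint : ∀ t, Integrable (fun ω => ⟪gradient L (θ t ω), G t ω⟫) μ := fun t =>
    sgd_inner_integrable (hfm0 t).aestronglyMeasurable (hGm0 t).aestronglyMeasurable
      (hf2 t) (hG2 t)
  have hfDint : ∀ t, Integrable (fun ω => ⟪gradient L (θ t ω), G t ω - gradient L (θ t ω)⟫) μ :=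
    fun t => sgd_inner_integrable (hfm0 t).aestronglyMeasurable (hDm t).aestronglyMeasurable
      (hf2 t) (hD2 t)
  -- integral identities
  have hinnerfG : ∀ t, ∫ ω, ⟪gradient L (θ t ω), G t ω⟫ ∂μ
      = ∫ ω, ‖gradient L (θ t ω)‖ ^ 2 ∂μ := by
    intro t
    have hpt : ∀ ω, ⟪gradient L (θ t ω), G t ω⟫
        = ‖gradient L (θ t ω)‖ ^ 2 + ⟪gradient L (θ t ω), G t ω - gradient L (θ t ω)⟫ := by
      intro ω
      rw [← real_inner_self_eq_norm_sq, ← inner_add_right]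
      congr 1
      abel
    rw [integral_congr_ae (Filter.Eventually.of_forall hpt),
      integral_add (hf2 t) (hfDint t), horth t, add_zero]
  have hnormG : ∀ t, ∫ ω, ‖G t ω‖ ^ 2 ∂μ
      = ∫ ω, ‖gradient L (θ t ω)‖ ^ 2 ∂μ + ∫ ω, ‖G t ω - gradient L (θ t ω)‖ ^ 2 ∂μ := by
    intro t
    have hpt : ∀ ω, ‖G t ω‖ ^ 2 = ‖gradient L (θ t ω)‖ ^ 2
        + 2 * ⟪gradient L (θ t ω), G t ω - gradient L (θ t ω)⟫
        + ‖G t ω - gradient L (θ t ω)‖ ^ 2 := by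
      intro ω
      have h : G t ω = gradient L (θ t ω) + (G t ω - gradient L (θ t ω)) := by abel
      nth_rewrite 1 [h]
      rw [norm_add_sq_real]
    have hI2 : Integrable (fun ω =>
        2 * ⟪gradient L (θ t ω), G t ω - gradient L (θ t ω)⟫) μ :=
      (hfDint t).const_mul 2
    have hI1 : Integrable (fun ω => ‖gradient L (θ t ω)‖ ^ 2
        + 2 * ⟪gradient L (θ t ω), G t ω - gradient L (θ t ω)⟫) μ := (hf2 t).add hI2
    rw [integral_congr_ae (Filter.Eventually.of_forall hpt),
      integral_add hI1 (hD2 t), integral_add (hf2 t) hI2, integral_const_mul, horth t]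
    ring
  -- pointwise descent
  have hptdesc : ∀ t ω, L (θ (t+1) ω) ≤ L (θ t ω) - η * ⟪gradient L (θ t ω), G t ω⟫
      + β / 2 * η ^ 2 * ‖G t ω‖ ^ 2 := by
    intro t ω
    have h := sgd_descent hβ hdiff hlip (θ t ω) (θ (t+1) ω)
    rw [hupd t ω] at h ⊢
    have h1 : θ t ω - η • G t ω - θ t ω = -(η • G t ω) := by abel
    rw [h1, inner_neg_right, real_inner_smul_right, norm_neg, norm_smul,
      Real.norm_eq_abs, abs_of_pos hη0, mul_pow] at h
    calc L (θ t ω - η • G t ω)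
        ≤ L (θ t ω) + -(η * ⟪gradient L (θ t ω), G t ω⟫)
          + β / 2 * (η ^ 2 * ‖G t ω‖ ^ 2) := h
      _ = L (θ t ω) - η * ⟪gradient L (θ t ω), G t ω⟫ + β / 2 * η ^ 2 * ‖G t ω‖ ^ 2 := by ring
  -- per-step integral inequality
  have hstep : ∀ t, ∫ ω, L (θ (t+1) ω) ∂μ ≤ ∫ ω, L (θ t ω) ∂μ
      - η / 2 * ∫ ω, ‖gradient L (θ t ω)‖ ^ 2 ∂μ + β * η ^ 2 * σ ^ 2 / 2 := by
    intro t
    have hRHS : Integrable (fun ω => L (θ t ω) - η * ⟪gradient L (θ t ω), G t ω⟫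
        + β / 2 * η ^ 2 * ‖G t ω‖ ^ 2) μ :=
      ((hLi t).sub ((hfGint t).const_mul η)).add (((hG2 t).const_mul (β / 2 * η ^ 2)))
    have h5 : ∫ ω, L (θ (t+1) ω) ∂μ ≤ ∫ ω, (L (θ t ω)
        - η * ⟪gradient L (θ t ω), G t ω⟫ + β / 2 * η ^ 2 * ‖G t ω‖ ^ 2) ∂μ :=
      integral_mono (hLi (t+1)) hRHS (fun ω => hptdesc t ω)
    have h6 : ∫ ω, (L (θ t ω) - η * ⟪gradient L (θ t ω), G t ω⟫
        + β / 2 * η ^ 2 * ‖G t ω‖ ^ 2) ∂μ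
        = ∫ ω, L (θ t ω) ∂μ - η * ∫ ω, ⟪gradient L (θ t ω), G t ω⟫ ∂μ
          + β / 2 * η ^ 2 * ∫ ω, ‖G t ω‖ ^ 2 ∂μ := by
      have hI3 : Integrable (fun ω => η * ⟪gradient L (θ t ω), G t ω⟫) μ :=
        (hfGint t).const_mul η
      have hI4 : Integrable (fun ω => L (θ t ω) - η * ⟪gradient L (θ t ω), G t ω⟫) μ :=
        (hLi t).sub hI3
      have hI5 : Integrable (fun ω => β / 2 * η ^ 2 * ‖G t ω‖ ^ 2) μ :=
        (hG2 t).const_mul (β / 2 * η ^ 2)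
      rw [integral_add hI4 hI5, integral_sub (hLi t) hI3,
        integral_const_mul, integral_const_mul]
    rw [h6, hinnerfG t, hnormG t] at h5
    have hfnn : 0 ≤ ∫ ω, ‖gradient L (θ t ω)‖ ^ 2 ∂μ :=
      integral_nonneg fun ω => by positivity
    have hv := hvarint t
    set F : ℝ := ∫ ω, ‖gradient L (θ t ω)‖ ^ 2 ∂μ with hF
    set V : ℝ := ∫ ω, ‖G t ω - gradient L (θ t ω)‖ ^ 2 ∂μ with hV
    set A : ℝ := ∫ ω, L (θ t ω) ∂μ with hA
    set B : ℝ := ∫ ω, L (θ (t+1) ω) ∂μ with hB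
    have hnn : (0:ℝ) ≤ β / 2 * η ^ 2 := by positivity
    nlinarith [h5, mul_nonneg (mul_nonneg hη0.le hfnn) (sub_nonneg.2 hηβ),
      mul_nonneg hnn (sub_nonneg.2 hv)]
  -- telescoping
  have htel : ∀ n : ℕ, ∫ ω, L (θ n ω) ∂μ
      + η / 2 * ∑ t ∈ range n, ∫ ω, ‖gradient L (θ t ω)‖ ^ 2 ∂μ
      ≤ ∫ ω, L (θ 0 ω) ∂μ + n * (β * η ^ 2 * σ ^ 2 / 2) := by
    intro n
    induction n with
    | zero => simp
    | succ n ih =>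
      have h := hstep n
      rw [Finset.sum_range_succ]
      push_cast
      nlinarith [h, ih]
  have hL0 : ∫ ω, L (θ 0 ω) ∂μ = L θ0 := by
    have h : (fun ω => L (θ 0 ω)) = fun _ => L θ0 := by
      funext ω; rw [hθ0 ω]
    rw [h]; simp
  have hLT : Lstar ≤ ∫ ω, L (θ T ω) ∂μ := by
    calc Lstar = ∫ _, Lstar ∂μ := by simp
      _ ≤ ∫ ω, L (θ T ω) ∂μ := integral_mono (integrable_const _) (hLi T)
          (fun ω => hLstar (θ T ω))
  set S : ℝ := ∑ t ∈ range T, ∫ ω, ‖gradient L (θ t ω)‖ ^ 2 ∂μ with hS_def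
  have hSnn : 0 ≤ S := Finset.sum_nonneg fun t _ => integral_nonneg fun ω => by positivity
  have hSsum : η / 2 * S ≤ Δ + T * (β * η ^ 2 * σ ^ 2 / 2) := by
    have h := htel T
    rw [hL0] at h
    linarith [hLT, hΔdef]
  -- average bound
  have havg : 1 / (T:ℝ) * S ≤ 2 * Δ / (T * η) + β * η * σ ^ 2 := by
    have h1 : S ≤ 2 * Δ / η + T * (β * η * σ ^ 2) := by
      have h3 : S = (η / 2 * S) * (2 / η) := by field_simp
      rw [h3]
      calc (η / 2 * S) * (2 / η) ≤ (Δ + T * (β * η ^ 2 * σ ^ 2 / 2)) * (2 / η) :=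
            mul_le_mul_of_nonneg_right hSsum (by positivity)
        _ = 2 * Δ / η + T * (β * η * σ ^ 2) := by field_simp
    calc 1 / (T:ℝ) * S ≤ 1 / (T:ℝ) * (2 * Δ / η + T * (β * η * σ ^ 2)) :=
          mul_le_mul_of_nonneg_left h1 (by positivity)
      _ = 2 * Δ / (T * η) + β * η * σ ^ 2 := by field_simp
  -- stepsize arithmetic
  have hsq2 : Real.sqrt (2 * β * Δ * σ ^ 2 / T)
      = Real.sqrt 2 * Real.sqrt (β * Δ * σ ^ 2 / T) := by
    rw [← Real.sqrt_mul (by norm_num : (0:ℝ) ≤ 2)]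
    congr 1
    ring
  have hbound1 : β * η * σ ^ 2 ≤ Real.sqrt (2 * β * Δ * σ ^ 2 / T) := by
    have e : 2 * β * Δ * σ ^ 2 / (T:ℝ) = (β * σ ^ 2) ^ 2 * (2 * Δ / (β * σ ^ 2 * T)) := by
      field_simp
    have h2 : Real.sqrt (2 * β * Δ * σ ^ 2 / T) = β * σ ^ 2 * a := by
      rw [e, Real.sqrt_mul (sq_nonneg _), Real.sqrt_sq (by positivity), ← ha_def]
    rw [h2]
    nlinarith [mul_nonneg (mul_nonneg hβ.le (sq_nonneg σ)) (sub_nonneg.2 hηa)]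
  have hbound2 : 2 * Δ / ((T:ℝ) * η) ≤ 2 * β * Δ / T + Real.sqrt (2 * β * Δ * σ ^ 2 / T) := by
    have hinv : 1 / η ≤ β + 1 / a := by
      rcases le_total (1 / β) a with h | h
      · rw [hη, min_eq_left h, one_div_one_div]
        have h0 : 0 ≤ 1 / a := (one_div_nonneg).2 ha.le
        linarith
      · rw [hη, min_eq_right h]
        linarith [hβ.le]
    have e2 : 2 * β * Δ * σ ^ 2 / (T:ℝ) = (2 * Δ / T) ^ 2 / (2 * Δ / (β * σ ^ 2 * T)) := by
      field_simp
    have hnum : (0:ℝ) ≤ 2 * Δ / T := div_nonneg (by linarith) hT0.le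
    have h3 : Real.sqrt (2 * β * Δ * σ ^ 2 / T) = (2 * Δ / T) * (1 / a) := by
      rw [e2, Real.sqrt_div (sq_nonneg _), Real.sqrt_sq hnum, ← ha_def]
      ring
    have h4 : 2 * Δ / ((T:ℝ) * η) = (2 * Δ / T) * (1 / η) := by
      field_simp
    rw [h4, h3]
    calc (2 * Δ / (T:ℝ)) * (1 / η) ≤ (2 * Δ / T) * (β + 1 / a) :=
          mul_le_mul_of_nonneg_left hinv hnum
      _ = 2 * β * Δ / T + (2 * Δ / T) * (1 / a) := by ring
  have hsqrt2 : Real.sqrt 2 ≤ 2 := by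
    nlinarith [Real.sq_sqrt (show (0:ℝ) ≤ 2 by norm_num), Real.sqrt_nonneg 2]
  have hfinal : 2 * β * Δ / (T:ℝ) + 2 * Real.sqrt (2 * β * Δ * σ ^ 2 / T)
      ≤ 4 * (β * Δ / T + Real.sqrt (β * Δ * σ ^ 2 / T)) := by
    have h1 : 0 ≤ β * Δ / (T:ℝ) := div_nonneg (mul_nonneg hβ.le hΔ.le) hT0.le
    have h2 : 0 ≤ Real.sqrt (β * Δ * σ ^ 2 / T) := Real.sqrt_nonneg _
    have e3 : 2 * β * Δ / (T:ℝ) = 2 * (β * Δ / T) := by ring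
    rw [hsq2, e3]
    nlinarith [mul_nonneg (sub_nonneg.2 hsqrt2) h2, h1]
  calc 1 / (T:ℝ) * S ≤ 2 * Δ / (T * η) + β * η * σ ^ 2 := havg
    _ ≤ 2 * β * Δ / T + Real.sqrt (2 * β * Δ * σ ^ 2 / T)
        + Real.sqrt (2 * β * Δ * σ ^ 2 / T) := by linarith [hbound1, hbound2]
    _ = 2 * β * Δ / T + 2 * Real.sqrt (2 * β * Δ * σ ^ 2 / T) := by ring
    _ ≤ 4 * (β * Δ / T + Real.sqrt (β * Δ * σ ^ 2 / T)) := hfinal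
end

section
/- Consider the PAGE gradient estimator: with probability p, g^t = G_b(θ^t) (a minibatch gradient of size b with E[G_b(θ)] = ∇L(θ) and Var ≤ σ²/b), and with probability 1−p, g^t = g^{t−1} + G_{b'}(θ^t) − G_{b'}(θ^{t−1}), where the minibatch differences satisfy the average smoothness bound E[‖G_{b'}(θ^t) − G_{b'}(θ^{t−1}) − (∇L(θ^t) − ∇L(θ^{t−1}))‖²] ≤ (β²/b')‖θ^t − θ^{t−1}‖². Then the estimator variance contracts: E_t[‖g^t − ∇L(θ^t)‖²] ≤ (1−p)‖g^{t−1} − ∇L(θ^{t−1})‖² + ((1−p)β²/b')‖θ^t − θ^{t−1}‖² + pσ²/b. -/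
open MeasureTheory ProbabilityTheory

/-- PAGE variance contraction. With probability `p`, `g^t` is a fresh
minibatch gradient `A = G_b(θ^t)` (unbiased, variance `≤ σ²/b`); with probability
`1−p`, `g^t = g^{t−1} + D` where `D = G_{b'}(θ^t) − G_{b'}(θ^{t−1})` has mean
`∇L(θ^t) − ∇L(θ^{t−1})` and variance `≤ (β²/b')‖θ^t − θ^{t−1}‖²`. Conditionally
on the history (so `g^{t−1}, θ^t, θ^{t−1}` are fixed):
`E_t[‖g^t − ∇L(θ^t)‖²] ≤ (1−p)‖g^{t−1} − ∇L(θ^{t−1})‖²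
  + ((1−p)β²/b')‖θ^t − θ^{t−1}‖² + pσ²/b`. -/
theorem page_variance_contraction
    (d : ℕ) (L : EuclideanSpace ℝ (Fin d) → ℝ)
    {Ω : Type} [MeasurableSpace Ω] (μ : Measure Ω) [IsProbabilityMeasure μ]
    (A D : Ω → EuclideanSpace ℝ (Fin d)) (s : Ω → Bool)
    (gprev θt θtm1 : EuclideanSpace ℝ (Fin d))
    (p σ b b' β : ℝ)
    (hp0 : 0 ≤ p) (hp1 : p ≤ 1) (hσ : 0 ≤ σ) (hb : 0 < b) (hb' : 0 < b')
    (hβ : 0 ≤ β)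
    (hdiff : ∀ x, DifferentiableAt ℝ L x)
    (hmeasA : Measurable A) (hmeasD : Measurable D) (hmeass : Measurable s)
    (hIntA : Integrable A μ) (hIntD : Integrable D μ)
    (hIntAsq : Integrable (fun ω => ‖A ω - gradient L θt‖ ^ 2) μ)
    (hIntDsq : Integrable (fun ω => ‖(gprev + D ω) - gradient L θt‖ ^ 2) μ)
    (hAunbiased : ∫ ω, A ω ∂μ = gradient L θt)
    (hAvar : ∫ ω, ‖A ω - gradient L θt‖ ^ 2 ∂μ ≤ σ ^ 2 / b)
    (hDmean : ∫ ω, D ω ∂μ = gradient L θt - gradient L θtm1)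
    (hDvar : ∫ ω, ‖D ω - (gradient L θt - gradient L θtm1)‖ ^ 2 ∂μ ≤
      (β ^ 2 / b') * ‖θt - θtm1‖ ^ 2)
    (hbern : μ (s ⁻¹' {true}) = ENNReal.ofReal p)
    (hindep : IndepFun s (fun ω => (A ω, D ω)) μ) :
    ∫ ω, ‖(if s ω then A ω else gprev + D ω) - gradient L θt‖ ^ 2 ∂μ ≤
      (1 - p) * ‖gprev - gradient L θtm1‖ ^ 2
        + ((1 - p) * β ^ 2 / b') * ‖θt - θtm1‖ ^ 2 + p * σ ^ 2 / b := by
  classical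
  set g := gradient L θt with hg
  set m := gradient L θt - gradient L θtm1 with hm
  set c := gprev - gradient L θtm1 with hc
  set u : Ω → ℝ := fun ω => if s ω then (1:ℝ) else 0 with hu
  set v : Ω → ℝ := fun ω => if s ω then (0:ℝ) else 1 with hv
  have hmeasset : MeasurableSet (s ⁻¹' {true}) := hmeass (measurableSet_singleton _)
  have hptoReal : (μ (s ⁻¹' {true})).toReal = p := by
    rw [hbern, ENNReal.toReal_ofReal hp0]
  have hu_eq : u = Set.indicator (s ⁻¹' {true}) fun _ => (1:ℝ) := by
    funext ω
    by_cases h : s ω <;> simp [hu, Set.indicator, Set.mem_preimage, h]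
  have hIntu : Integrable u μ := by
    rw [hu_eq]; exact (integrable_const (1:ℝ)).indicator hmeasset
  have hIu : ∫ ω, u ω ∂μ = p := by
    rw [hu_eq, integral_indicator_const _ hmeasset]
    simp [measureReal_def, hptoReal]
  have hv_eq : v = fun ω => 1 - u ω := by
    funext ω; by_cases h : s ω <;> simp [hu, hv, h]
  have hIntv : Integrable v μ := by
    rw [hv_eq]; exact (integrable_const (1:ℝ)).sub hIntu
  have hIv : ∫ ω, v ω ∂μ = 1 - p := by
    rw [hv_eq, integral_sub (integrable_const _) hIntu, hIu,
      integral_const]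
    simp
  -- measurability of the squared-norm functionals
  have hψA : Measurable fun z : EuclideanSpace ℝ (Fin d) × EuclideanSpace ℝ (Fin d) =>
      ‖z.1 - g‖ ^ 2 := by fun_prop
  have hψD : Measurable fun z : EuclideanSpace ℝ (Fin d) × EuclideanSpace ℝ (Fin d) =>
      ‖(gprev + z.2) - g‖ ^ 2 := by fun_prop
  have hφu : Measurable fun x : Bool => if x then (1:ℝ) else 0 := by
    exact measurable_from_top
  have hφv : Measurable fun x : Bool => if x then (0:ℝ) else 1 := by
    exact measurable_from_top
  have hindepA : IndepFun u (fun ω => ‖A ω - g‖ ^ 2) μ := hindep.comp hφu hψA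
  have hindepD : IndepFun v (fun ω => ‖(gprev + D ω) - g‖ ^ 2) μ := hindep.comp hφv hψD
  -- split the integral
  have hsplit : ∀ ω, ‖(if s ω then A ω else gprev + D ω) - g‖ ^ 2
      = u ω * ‖A ω - g‖ ^ 2 + v ω * ‖(gprev + D ω) - g‖ ^ 2 := by
    intro ω; by_cases h : s ω <;> simp [hu, hv, h]
  have hIntuA : Integrable (fun ω => u ω * ‖A ω - g‖ ^ 2) μ :=
    hindepA.integrable_mul hIntu hIntAsq
  have hIntvD : Integrable (fun ω => v ω * ‖(gprev + D ω) - g‖ ^ 2) μ :=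
    hindepD.integrable_mul hIntv hIntDsq
  have hIeq : ∫ ω, ‖(if s ω then A ω else gprev + D ω) - g‖ ^ 2 ∂μ
      = p * (∫ ω, ‖A ω - g‖ ^ 2 ∂μ) + (1 - p) * (∫ ω, ‖(gprev + D ω) - g‖ ^ 2 ∂μ) := by
    calc ∫ ω, ‖(if s ω then A ω else gprev + D ω) - g‖ ^ 2 ∂μ
        = ∫ ω, (u ω * ‖A ω - g‖ ^ 2 + v ω * ‖(gprev + D ω) - g‖ ^ 2) ∂μ := by
          exact integral_congr_ae (Filter.Eventually.of_forall hsplit)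
      _ = (∫ ω, u ω * ‖A ω - g‖ ^ 2 ∂μ) + ∫ ω, v ω * ‖(gprev + D ω) - g‖ ^ 2 ∂μ :=
          integral_add hIntuA hIntvD
      _ = p * (∫ ω, ‖A ω - g‖ ^ 2 ∂μ) + (1 - p) * (∫ ω, ‖(gprev + D ω) - g‖ ^ 2 ∂μ) := by
          have h1 : ∫ ω, u ω * ‖A ω - g‖ ^ 2 ∂μ
              = p * ∫ ω, ‖A ω - g‖ ^ 2 ∂μ := by
            rw [← hIu]; exact hindepA.integral_fun_mul_eq_mul_integral hIntu.aestronglyMeasurable hIntAsq.aestronglyMeasurable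
          have h2 : ∫ ω, v ω * ‖(gprev + D ω) - g‖ ^ 2 ∂μ
              = (1 - p) * ∫ ω, ‖(gprev + D ω) - g‖ ^ 2 ∂μ := by
            rw [← hIv]; exact hindepD.integral_fun_mul_eq_mul_integral hIntv.aestronglyMeasurable hIntDsq.aestronglyMeasurable
          rw [h1, h2]
  -- bound the D part
  have hIntDm : Integrable (fun ω => D ω - m) μ := hIntD.sub (integrable_const m)
  have hInner : Integrable (fun ω => (inner ℝ c (D ω - m) : ℝ)) μ :=
    hIntDm.const_inner c
  have hdecomp : ∀ ω, ‖(gprev + D ω) - g‖ ^ 2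
      = ‖D ω - m‖ ^ 2 + 2 * (inner ℝ (D ω - m) c : ℝ) + ‖c‖ ^ 2 := by
    intro ω
    have h1 : (gprev + D ω) - g = (D ω - m) + c := by
      rw [hm, hc]; abel
    rw [h1, norm_add_sq_real]
  have hIntDmsq : Integrable (fun ω => ‖D ω - m‖ ^ 2) μ := by
    have : (fun ω => ‖D ω - m‖ ^ 2)
        = fun ω => ‖(gprev + D ω) - g‖ ^ 2 - 2 * (inner ℝ c (D ω - m) : ℝ) - ‖c‖ ^ 2 := by
      funext ω
      rw [hdecomp ω, real_inner_comm]
      ring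
    rw [this]
    exact (hIntDsq.sub (hInner.const_mul 2)).sub (integrable_const _)
  have hIinner : ∫ ω, (inner ℝ c (D ω - m) : ℝ) ∂μ = 0 := by
    rw [integral_inner hIntDm c, integral_sub hIntD (integrable_const m),
      hDmean, integral_const]
    simp
  have hDpart : ∫ ω, ‖(gprev + D ω) - g‖ ^ 2 ∂μ
      ≤ (β ^ 2 / b') * ‖θt - θtm1‖ ^ 2 + ‖c‖ ^ 2 := by
    have heq : ∫ ω, ‖(gprev + D ω) - g‖ ^ 2 ∂μ
        = (∫ ω, ‖D ω - m‖ ^ 2 ∂μ) + ‖c‖ ^ 2 := by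
      calc ∫ ω, ‖(gprev + D ω) - g‖ ^ 2 ∂μ
          = ∫ ω, (‖D ω - m‖ ^ 2 + 2 * (inner ℝ c (D ω - m) : ℝ) + ‖c‖ ^ 2) ∂μ := by
            refine integral_congr_ae (Filter.Eventually.of_forall fun ω => ?_)
            show ‖(gprev + D ω) - g‖ ^ 2
              = ‖D ω - m‖ ^ 2 + 2 * (inner ℝ c (D ω - m) : ℝ) + ‖c‖ ^ 2
            rw [hdecomp ω, real_inner_comm]
        _ = (∫ ω, ‖D ω - m‖ ^ 2 ∂μ) + 2 * (∫ ω, (inner ℝ c (D ω - m) : ℝ) ∂μ)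
              + ‖c‖ ^ 2 := by
            have hf1 : Integrable
                (fun ω => ‖D ω - m‖ ^ 2 + 2 * (inner ℝ c (D ω - m) : ℝ)) μ :=
              hIntDmsq.add (hInner.const_mul 2)
            rw [integral_add hf1 (integrable_const _),
              integral_add hIntDmsq (hInner.const_mul 2), integral_const,
              integral_const_mul]
            simp
        _ = (∫ ω, ‖D ω - m‖ ^ 2 ∂μ) + ‖c‖ ^ 2 := by rw [hIinner]; ring
    rw [heq]
    linarith [hDvar]
  rw [hIeq]
  have h1p : 0 ≤ 1 - p := by linarith
  have hterm1 : p * (∫ ω, ‖A ω - g‖ ^ 2 ∂μ) ≤ p * σ ^ 2 / b := by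
    calc p * (∫ ω, ‖A ω - g‖ ^ 2 ∂μ) ≤ p * (σ ^ 2 / b) := by
          exact mul_le_mul_of_nonneg_left hAvar hp0
      _ = p * σ ^ 2 / b := by ring
  have hterm2 : (1 - p) * (∫ ω, ‖(gprev + D ω) - g‖ ^ 2 ∂μ)
      ≤ (1 - p) * ‖c‖ ^ 2 + ((1 - p) * β ^ 2 / b') * ‖θt - θtm1‖ ^ 2 := by
    calc (1 - p) * (∫ ω, ‖(gprev + D ω) - g‖ ^ 2 ∂μ)
        ≤ (1 - p) * ((β ^ 2 / b') * ‖θt - θtm1‖ ^ 2 + ‖c‖ ^ 2) :=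
          mul_le_mul_of_nonneg_left hDpart h1p
      _ = (1 - p) * ‖c‖ ^ 2 + ((1 - p) * β ^ 2 / b') * ‖θt - θtm1‖ ^ 2 := by ring
  rw [hc] at hterm2
  linarith
end
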